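/- With L as above (n ≥ 3), every element of L can be written uniquely as i·v + k·u with 0 ≤ i < n(n-2) and 0 ≤ k < n-1; that is, the map (i,k) ↦ i·v + k·u from {0,…,n(n-2)-1} × {0,…,n-2} to L is a bijection. -/

import Mathlib

/-!
Since `w = (n-1)•v`, the group `L` is generated by `v` and `u`, which satisfy
`(n(n-2))•v = 0` and `(n-1)•u = n•v`; reducing the coefficient of `u` modulo `n-1` and then
that of `v` modulo `n(n-2)` puts every element in the form `i•v + k•u`. For uniqueness, the
third coordinate of `i•v + k•u` is `k/(n-1)`, which determines `k`, and then the second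
coordinate of `i•v` is `i/(n(n-2))`, which determines `i`.
-/

section NormalForm

variable {G : Type*} [AddCommGroup G]

lemma AddSubgroup.closure_insert_eq_of_mem {s : Set G} {w : G} (hw : w ∈ closure s) :
    closure (insert w s) = closure s :=
  le_antisymm (closure_le _ |>.2 (Set.insert_subset hw subset_closure))
    (closure_mono (Set.subset_insert w s))

lemma exists_fin_zsmul_eq_nsmul_add (x : G) {N : ℕ} (hN : 0 < N) (m : ℤ) :
    ∃ (i : Fin N) (q : ℤ), m • x = (i : ℕ) • x + q • N • x := by
  have hr : 0 ≤ m % N := Int.emod_nonneg m (by omega)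
  have hlt : m % N < N := Int.emod_lt_of_pos m (by omega)
  refine ⟨⟨(m % N).toNat, by omega⟩, m / N, ?_⟩
  rw [← natCast_zsmul, Int.toNat_of_nonneg hr, ← natCast_zsmul, smul_smul, ← add_zsmul,
    Int.emod_add_ediv_mul]

lemma exists_nsmul_add_nsmul_eq_of_mem_closure_pair {v u x : G} {N M : ℕ} {c : ℤ}
    (hN : 0 < N) (hM : 0 < M) (hv : N • v = 0) (hu : M • u = c • v)
    (hx : x ∈ AddSubgroup.closure {v, u}) :
    ∃ p : Fin N × Fin M, (p.1 : ℕ) • v + (p.2 : ℕ) • u = x := by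
  obtain ⟨a, b, rfl⟩ := AddSubgroup.mem_closure_pair.1 hx
  obtain ⟨k, q, hb⟩ := exists_fin_zsmul_eq_nsmul_add u hM b
  obtain ⟨i, _, ha⟩ := exists_fin_zsmul_eq_nsmul_add v hN (a + q * c)
  rw [hv, smul_zero, add_zero, add_zsmul, mul_zsmul] at ha
  refine ⟨(i, k), ?_⟩
  rw [hb, hu, ← ha]
  abel

lemma injective_nsmul_add_nsmul {H K : Type*} [AddCommGroup H] [AddCommGroup K]
    (f : G →+ H) (g : G →+ K) {v u : G} {N M : ℕ} (hfv : f v = 0)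
    (hfu : addOrderOf (f u) = M) (hgv : addOrderOf (g v) = N) :
    Function.Injective fun p : Fin N × Fin M => (p.1 : ℕ) • v + (p.2 : ℕ) • u := by
  rintro ⟨i, k⟩ ⟨i', k'⟩ h
  have hk : k = k' := by
    have := congrArg f h
    simp only [map_add, map_nsmul, hfv, smul_zero, zero_add] at this
    exact Fin.ext <| nsmul_injOn_Iio_addOrderOf (by simp [hfu]) (by simp [hfu]) this
  subst hk
  have := congrArg g (add_right_cancel h)
  simp only [map_nsmul] at this
  rw [Fin.ext <| nsmul_injOn_Iio_addOrderOf (by simp [hgv]) (by simp [hgv]) this]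

end NormalForm

lemma AddCircle.coe_eq_coe_of_sub_eq_intCast {𝕜 : Type*} [Ring 𝕜] {a b : 𝕜} (z : ℤ)
    (h : a - b = z) : (a : AddCircle (1 : 𝕜)) = b := by
  rw [← sub_eq_zero, ← AddCircle.coe_sub, AddCircle.coe_eq_zero_iff]
  exact ⟨z, by rw [h, zsmul_one]⟩

def generatorV (n : ℕ) : Fin 4 → AddCircle (1 : ℚ) :=
  ![(((n - 1) / (n * (n - 2)) : ℚ) : AddCircle (1 : ℚ)),
      ((1 / (n * (n - 2)) : ℚ) : AddCircle (1 : ℚ)), (((0 : ℚ)) : AddCircle (1 : ℚ)),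
      (((-1) / (n - 2) : ℚ) : AddCircle (1 : ℚ))]

def generatorW (n : ℕ) : Fin 4 → AddCircle (1 : ℚ) :=
  ![((1 / (n * (n - 2)) : ℚ) : AddCircle (1 : ℚ)),
      (((n - 1) / (n * (n - 2)) : ℚ) : AddCircle (1 : ℚ)), (((0 : ℚ)) : AddCircle (1 : ℚ)),
      (((-1) / (n - 2) : ℚ) : AddCircle (1 : ℚ))]

def generatorU (n : ℕ) : Fin 4 → AddCircle (1 : ℚ) :=
  ![((1 / ((n - 1) * (n - 2)) : ℚ) : AddCircle (1 : ℚ)),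
      ((1 / ((n - 1) * (n - 2)) : ℚ) : AddCircle (1 : ℚ)),
      ((1 / (n - 1) : ℚ) : AddCircle (1 : ℚ)),
      (((-n) / ((n - 1) * (n - 2)) : ℚ) : AddCircle (1 : ℚ))]

section Generators

variable {n : ℕ}

lemma cast_ne_zero_of_three_le (hn : 3 ≤ n) :
    (n : ℚ) ≠ 0 ∧ (n : ℚ) - 1 ≠ 0 ∧ (n : ℚ) - 2 ≠ 0 := by
  have : (3 : ℚ) ≤ n := by exact_mod_cast hn
  refine ⟨by positivity, ?_, ?_⟩ <;> intro h <;> linarith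

lemma generatorW_eq (hn : 3 ≤ n) : generatorW n = (n - 1) • generatorV n := by
  obtain ⟨h0, -, h2⟩ := cast_ne_zero_of_three_le hn
  ext j
  fin_cases j <;>
    simp only [generatorV, generatorW, Pi.smul_apply, Fin.reduceFinMk, Matrix.cons_val,
      ← AddCircle.coe_nsmul, nsmul_eq_mul,       Nat.cast_sub (by omega : 1 ≤ n), Nat.cast_one]
  · exact AddCircle.coe_eq_coe_of_sub_eq_intCast (-1) (by field_simp; ring)
  · exact congrArg _ (by ring)
  · exact congrArg _ (by ring)
  · exact AddCircle.coe_eq_coe_of_sub_eq_intCast 1 (by field_simp; ring)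

lemma pred_nsmul_generatorU (hn : 3 ≤ n) : (n - 1) • generatorU n = n • generatorV n := by
  obtain ⟨h0, h1, h2⟩ := cast_ne_zero_of_three_le hn
  ext j
  fin_cases j <;>
    simp only [generatorV, generatorU, Pi.smul_apply, Fin.reduceFinMk, Matrix.cons_val,
      ← AddCircle.coe_nsmul, nsmul_eq_mul,       Nat.cast_sub (by omega : 1 ≤ n), Nat.cast_one]
  · exact AddCircle.coe_eq_coe_of_sub_eq_intCast (-1) (by field_simp; ring)
  · exact congrArg _ (by field_simp)
  · exact AddCircle.coe_eq_coe_of_sub_eq_intCast 1 (by field_simp; simp)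
  · exact congrArg _ (by field_simp)

lemma nsmul_generatorV_eq_zero (hn : 3 ≤ n) : (n * (n - 2)) • generatorV n = 0 := by
  obtain ⟨h0, -, h2⟩ := cast_ne_zero_of_three_le hn
  ext j
  fin_cases j <;>
    simp only [generatorV, Pi.smul_apply, Pi.zero_apply, Fin.reduceFinMk, Matrix.cons_val,
      ← AddCircle.coe_nsmul, nsmul_eq_mul, ← AddCircle.coe_zero,
      Nat.cast_mul, Nat.cast_sub (by omega : 2 ≤ n), Nat.cast_ofNat]
  · exact AddCircle.coe_eq_coe_of_sub_eq_intCast (n - 1) (by push_cast; field_simp; ring)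
  · exact AddCircle.coe_eq_coe_of_sub_eq_intCast 1 (by field_simp; simp)
  · exact congrArg _ (by ring)
  · exact AddCircle.coe_eq_coe_of_sub_eq_intCast (-n) (by push_cast; field_simp; ring)

lemma addOrderOf_generatorV_one (hn : 3 ≤ n) : addOrderOf (generatorV n 1) = n * (n - 2) := by
  have hcast : ((n * (n - 2) : ℕ) : ℚ) = n * (n - 2) := by
    rw [Nat.cast_mul, Nat.cast_sub (by omega : 2 ≤ n), Nat.cast_ofNat]
  simpa [generatorV, hcast] using
    AddCircle.addOrderOf_period_div (p := (1 : ℚ)) (hp := ⟨one_pos⟩) (n := n * (n - 2))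
      (Nat.mul_pos (by omega) (by omega))

lemma addOrderOf_generatorU_two (hn : 3 ≤ n) : addOrderOf (generatorU n 2) = n - 1 := by
  have hcast : ((n - 1 : ℕ) : ℚ) = n - 1 := by
    rw [Nat.cast_sub (by omega : 1 ≤ n), Nat.cast_one]
  simpa [generatorU, hcast] using
    AddCircle.addOrderOf_period_div (p := (1 : ℚ)) (hp := ⟨one_pos⟩) (n := n - 1) (by omega)

end Generators

/-- Every element of the group `L` generated by `v, w, u` is uniquely of the form
`i•v + k•u` with `0 ≤ i < n(n-2)` and `0 ≤ k < n-1`. -/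
theorem L_normal_form (n : ℕ) (hn : 3 ≤ n)
    (v w u : Fin 4 → AddCircle (1 : ℚ))
    (hv : v = ![(((n - 1) / (n * (n - 2)) : ℚ) : AddCircle (1 : ℚ)),
      ((1 / (n * (n - 2)) : ℚ) : AddCircle (1 : ℚ)), (((0 : ℚ)) : AddCircle (1 : ℚ)),
      (((-1) / (n - 2) : ℚ) : AddCircle (1 : ℚ))])
    (hw : w = ![((1 / (n * (n - 2)) : ℚ) : AddCircle (1 : ℚ)),
      (((n - 1) / (n * (n - 2)) : ℚ) : AddCircle (1 : ℚ)), (((0 : ℚ)) : AddCircle (1 : ℚ)),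
      (((-1) / (n - 2) : ℚ) : AddCircle (1 : ℚ))])
    (hu : u = ![((1 / ((n - 1) * (n - 2)) : ℚ) : AddCircle (1 : ℚ)),
      ((1 / ((n - 1) * (n - 2)) : ℚ) : AddCircle (1 : ℚ)),
      ((1 / (n - 1) : ℚ) : AddCircle (1 : ℚ)),
      (((-n) / ((n - 1) * (n - 2)) : ℚ) : AddCircle (1 : ℚ))]) :
    ∀ x ∈ AddSubgroup.closure ({v, w, u} : Set (Fin 4 → AddCircle (1 : ℚ))),
      ∃! p : Fin (n * (n - 2)) × Fin (n - 1), (p.1 : ℕ) • v + (p.2 : ℕ) • u = x := by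
  obtain rfl : v = generatorV n := hv
  obtain rfl : w = generatorW n := hw
  obtain rfl : u = generatorU n := hu
  have hw_mem : generatorW n ∈ AddSubgroup.closure {generatorV n, generatorU n} := by
    rw [generatorW_eq hn]
    exact AddSubgroup.nsmul_mem _ (AddSubgroup.subset_closure (Set.mem_insert _ _)) _
  intro x hx
  rw [Set.insert_comm, AddSubgroup.closure_insert_eq_of_mem hw_mem] at hx
  obtain ⟨p, hp⟩ := exists_nsmul_add_nsmul_eq_of_mem_closure_pair (M := n - 1) (c := n)
    (Nat.mul_pos (by omega) (by omega)) (by omega) (nsmul_generatorV_eq_zero hn)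
    (by rw [natCast_zsmul]; exact pred_nsmul_generatorU hn) hx
  have hinj := injective_nsmul_add_nsmul (v := generatorV n) (u := generatorU n)
    (Pi.evalAddMonoidHom _ 2) (Pi.evalAddMonoidHom _ 1) rfl
    (addOrderOf_generatorU_two hn) (addOrderOf_generatorV_one hn)
  exact ⟨p, hp, fun q hq => hinj (hq.trans hp.symm)⟩
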